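/- Let γ₁₁, γ₁₂, γ₂₂, h, m¹, m², b : ℝ² → ℝ be differentiable with γ(x) ≠ 0 and h(x) ≠ 0 for all x (γ := γ₁₁γ₂₂ − γ₁₂²), and let g ∈ ℝ. Define the stress tensor T^{ij} = m^i m^j / h + ½ g h² γ^{ij} and the source S^i = −g h Σ_j γ^{ij} ∂_j b. Then the second momentum balance operator of the shallow water system on a manifold admits the flux/nonconservative splitting: at every point, Σ_j ∂_j T^{2j} + Σ_{j,k} Γ²_{jk} T^{kj} + Σ_{j,k} Γ^j_{jk} T^{2k} − S² = ∂₁(m¹m²/h) + ∂₂((m²)²/h) + (1/γ)[ −g h γ₁₂ (∂₁h + ∂₁b) + (m¹/(2h))(m²γ₂₂ − m¹γ₁₂) ∂₁γ₁₁ + (m¹/h)(m¹γ₁₁ − m²γ₁₂) ∂₁γ₁₂ + (m²/(2h))(3m¹γ₁₁ + m²γ₁₂) ∂₁γ₂₂ ] + (1/γ)[ g h γ₁₁ (∂₂h + ∂₂b) − (1/(2h))(2m¹m²γ₁₂ + (m¹)²γ₁₁ − (m²)²γ₂₂) ∂₂γ₁₁ − (2(m²)²γ₁₂/h) ∂₂γ₁₂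 + ((m²)²γ₁₁/h) ∂₂γ₂₂ ]. -/

import Mathlib

/-! Write the stress as `T = m ⊗ m / h + (½ g h²) γ⁻¹`. The Levi-Civita connection is metric,
so the inverse metric has vanishing covariant divergence; by the Leibniz rule the pressure part
then contributes only `g h γ^{2j} ∂_j h`, which together with the source gives the gradient
terms `g h γ^{2j} (∂_j h + ∂_j b)`. What remains are the Christoffel terms of the momentum flux,
expanded explicitly. -/

open Real

noncomputable section

/-- Partial derivative in direction `j` (j = 0 ↦ ∂₁, j = 1 ↦ ∂₂) of a scalar
function on ℝ². -/
def pd (j : Fin 2) (f : ℝ × ℝ → ℝ) (x : ℝ × ℝ) : ℝ :=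
  fderiv ℝ f x (if j = 0 then ((1 : ℝ), (0 : ℝ)) else ((0 : ℝ), (1 : ℝ)))

/-- Covariant components of the symmetric metric tensor (γ₂₁ = γ₁₂). -/
def gcov (g11 g12 g22 : ℝ × ℝ → ℝ) : Fin 2 → Fin 2 → ℝ × ℝ → ℝ :=
  fun i j => !![g11, g12; g12, g22] i j

/-- Determinant γ = γ₁₁γ₂₂ − γ₁₂² of the metric. -/
def gdet (g11 g12 g22 : ℝ × ℝ → ℝ) (x : ℝ × ℝ) : ℝ :=
  g11 x * g22 x - g12 x ^ 2

/-- Contravariant (inverse) components of the metric: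
γ^{11} = γ₂₂/γ, γ^{12} = γ^{21} = −γ₁₂/γ, γ^{22} = γ₁₁/γ. -/
def gcon (g11 g12 g22 : ℝ × ℝ → ℝ) : Fin 2 → Fin 2 → ℝ × ℝ → ℝ :=
  fun i j =>
    !![fun x => g22 x / gdet g11 g12 g22 x,
       fun x => -g12 x / gdet g11 g12 g22 x;
       fun x => -g12 x / gdet g11 g12 g22 x,
       fun x => g11 x / gdet g11 g12 g22 x] i j

/-- Christoffel symbols
Γ^i_{jk} = ½ Σ_m γ^{im} (∂_j γ_{km} + ∂_k γ_{jm} − ∂_m γ_{jk}). -/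
def Gamma (g11 g12 g22 : ℝ × ℝ → ℝ) (i j k : Fin 2) (x : ℝ × ℝ) : ℝ :=
  (1 / 2) * ∑ m : Fin 2, gcon g11 g12 g22 i m x *
    (pd j (gcov g11 g12 g22 k m) x + pd k (gcov g11 g12 g22 j m) x
      - pd m (gcov g11 g12 g22 j k) x)

/-- Stress tensor T^{ij} = m^i m^j / h + ½ g h² γ^{ij}. -/
def stress (g11 g12 g22 h m1 m2 : ℝ × ℝ → ℝ) (g : ℝ) (i j : Fin 2)
    (y : ℝ × ℝ) : ℝ :=
  ![m1, m2] i y * ![m1, m2] j y / h y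
    + (1 / 2) * g * h y ^ 2 * gcon g11 g12 g22 i j y

/-- Source S^i = −g h Σ_j γ^{ij} ∂_j b. -/
def source (g11 g12 g22 h b : ℝ × ℝ → ℝ) (g : ℝ) (i : Fin 2) (x : ℝ × ℝ) : ℝ :=
  -(g * h x * ∑ j : Fin 2, gcon g11 g12 g22 i j x * pd j b x)

section PartialDerivative

variable {f φ : ℝ × ℝ → ℝ} {x : ℝ × ℝ} {j : Fin 2}

theorem pd_add (hf : DifferentiableAt ℝ f x) (hφ : DifferentiableAt ℝ φ x) :
    pd j (fun y => f y + φ y) x = pd j f x + pd j φ x := by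
  simp [pd, fderiv_fun_add hf hφ]

theorem pd_sub (hf : DifferentiableAt ℝ f x) (hφ : DifferentiableAt ℝ φ x) :
    pd j (fun y => f y - φ y) x = pd j f x - pd j φ x := by
  simp [pd, fderiv_fun_sub hf hφ]

theorem pd_mul (hf : DifferentiableAt ℝ f x) (hφ : DifferentiableAt ℝ φ x) :
    pd j (fun y => f y * φ y) x = pd j f x * φ x + f x * pd j φ x := by
  simp only [pd, fderiv_fun_mul hf hφ, add_apply, smul_apply, smul_eq_mul]
  ring

theorem pd_neg : pd j (fun y => -f y) x = -pd j f x := by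
  simp [pd]

theorem pd_sq (hf : DifferentiableAt ℝ f x) :
    pd j (fun y => f y ^ 2) x = 2 * f x * pd j f x := by
  simp only [sq, pd_mul hf hf]
  ring

theorem pd_inv (hφ : DifferentiableAt ℝ φ x) (h0 : φ x ≠ 0) :
    pd j (fun y => (φ y)⁻¹) x = -pd j φ x / φ x ^ 2 := by
  have hcomp : (fun y => (φ y)⁻¹) = (Inv.inv : ℝ → ℝ) ∘ φ := rfl
  rw [pd, hcomp, fderiv_comp x (differentiableAt_inv h0) hφ, fderiv_inv' h0]
  simp only [ContinuousLinearMap.neg_comp, neg_apply, ContinuousLinearMap.comp_apply,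
    ContinuousLinearMap.mulLeftRight_apply, pd]
  field_simp

theorem pd_div (hf : DifferentiableAt ℝ f x) (hφ : DifferentiableAt ℝ φ x) (h0 : φ x ≠ 0) :
    pd j (fun y => f y / φ y) x = (pd j f x * φ x - f x * pd j φ x) / φ x ^ 2 := by
  simp only [div_eq_mul_inv]
  rw [pd_mul hf (hφ.fun_inv h0), pd_inv hφ h0]
  field_simp
  ring

theorem pd_const_mul (c : ℝ) (hf : DifferentiableAt ℝ f x) :
    pd j (fun y => c * f y) x = c * pd j f x := by
  simp [pd, fderiv_const_mul hf]

end PartialDerivative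

theorem differentiableAt_gdet {g11 g12 g22 : ℝ × ℝ → ℝ} {x : ℝ × ℝ}
    (h11 : DifferentiableAt ℝ g11 x) (h12 : DifferentiableAt ℝ g12 x)
    (h22 : DifferentiableAt ℝ g22 x) : DifferentiableAt ℝ (gdet g11 g12 g22) x := by
  unfold gdet
  fun_prop

theorem pd_gdet {g11 g12 g22 : ℝ × ℝ → ℝ} {x : ℝ × ℝ} {j : Fin 2}
    (h11 : DifferentiableAt ℝ g11 x) (h12 : DifferentiableAt ℝ g12 x)
    (h22 : DifferentiableAt ℝ g22 x) :
    pd j (gdet g11 g12 g22) x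
      = pd j g11 x * g22 x + g11 x * pd j g22 x - 2 * g12 x * pd j g12 x := by
  unfold gdet
  rw [pd_sub (by fun_prop) (by fun_prop), pd_mul h11 h22, pd_sq h12]

theorem differentiableAt_gcon {g11 g12 g22 : ℝ × ℝ → ℝ} {x : ℝ × ℝ}
    (h11 : DifferentiableAt ℝ g11 x) (h12 : DifferentiableAt ℝ g12 x)
    (h22 : DifferentiableAt ℝ g22 x) (hγ : gdet g11 g12 g22 x ≠ 0) (i j : Fin 2) :
    DifferentiableAt ℝ (gcon g11 g12 g22 i j) x := by
  have hdet := differentiableAt_gdet h11 h12 h22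
  fin_cases i <;> fin_cases j <;>
  simp only [gcon, Fin.zero_eta, Fin.mk_one, Fin.isValue, Matrix.of_apply, Matrix.cons_val',
    Matrix.cons_val_zero, Matrix.cons_val_one, Matrix.cons_val_fin_one] <;>
  fun_prop (disch := exact hγ)

def covDiv (g11 g12 g22 : ℝ × ℝ → ℝ) (i : Fin 2) (T : Fin 2 → Fin 2 → ℝ × ℝ → ℝ)
    (x : ℝ × ℝ) : ℝ :=
  (∑ j : Fin 2, pd j (T i j) x)
    + (∑ j : Fin 2, ∑ k : Fin 2, Gamma g11 g12 g22 i j k x * T k j x)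
    + (∑ j : Fin 2, ∑ k : Fin 2, Gamma g11 g12 g22 j j k x * T i k x)

section CovDiv

variable {g11 g12 g22 : ℝ × ℝ → ℝ} {x : ℝ × ℝ} {i : Fin 2}

theorem covDiv_add {A B : Fin 2 → Fin 2 → ℝ × ℝ → ℝ}
    (hA : ∀ j, DifferentiableAt ℝ (A i j) x) (hB : ∀ j, DifferentiableAt ℝ (B i j) x) :
    covDiv g11 g12 g22 i (fun k l y => A k l y + B k l y) x
      = covDiv g11 g12 g22 i A x + covDiv g11 g12 g22 i B x := by
  simp only [covDiv, pd_add (hA _) (hB _), mul_add, Finset.sum_add_distrib]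
  ring

theorem covDiv_mul {φ : ℝ × ℝ → ℝ} {A : Fin 2 → Fin 2 → ℝ × ℝ → ℝ}
    (hφ : DifferentiableAt ℝ φ x) (hA : ∀ j, DifferentiableAt ℝ (A i j) x) :
    covDiv g11 g12 g22 i (fun k l y => φ y * A k l y) x
      = φ x * covDiv g11 g12 g22 i A x + ∑ j : Fin 2, pd j φ x * A i j x := by
  simp only [covDiv, pd_mul hφ (hA _), Fin.sum_univ_two]
  ring

theorem covDiv_gcon (h11 : DifferentiableAt ℝ g11 x) (h12 : DifferentiableAt ℝ g12 x)
    (h22 : DifferentiableAt ℝ g22 x) (hγ : gdet g11 g12 g22 x ≠ 0) :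
    covDiv g11 g12 g22 i (gcon g11 g12 g22) x = 0 := by
  have hdet := differentiableAt_gdet h11 h12 h22
  fin_cases i <;>
  simp only [covDiv, _root_.Gamma, gcon, gcov, Fin.sum_univ_two, Fin.zero_eta, Fin.mk_one,
    Fin.isValue, Matrix.of_apply, Matrix.cons_val', Matrix.cons_val_zero, Matrix.cons_val_one,
    Matrix.cons_val_fin_one]
  all_goals
    simp only [pd_div h11 hdet hγ, pd_div h22 hdet hγ, pd_div h12.fun_neg hdet hγ, pd_neg,
      pd_gdet h11 h12 h22]
    unfold gdet at hγ ⊢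
    field_simp
    ring

end CovDiv

theorem covDiv_pressure {g11 g12 g22 h : ℝ × ℝ → ℝ} {x : ℝ × ℝ} (g : ℝ) (i : Fin 2)
    (h11 : DifferentiableAt ℝ g11 x) (h12 : DifferentiableAt ℝ g12 x)
    (h22 : DifferentiableAt ℝ g22 x) (hh : DifferentiableAt ℝ h x)
    (hγ : gdet g11 g12 g22 x ≠ 0) :
    covDiv g11 g12 g22 i (fun k l y => (1 / 2 * g * h y ^ 2) * gcon g11 g12 g22 k l y) x
      = g * h x * ∑ j : Fin 2, gcon g11 g12 g22 i j x * pd j h x := by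
  rw [covDiv_mul (by fun_prop) (differentiableAt_gcon h11 h12 h22 hγ i),
    covDiv_gcon h11 h12 h22 hγ]
  simp only [pd_const_mul (1 / 2 * g) (hh.fun_pow 2), pd_sq hh, Fin.sum_univ_two]
  ring

def momentumFlux (h m1 m2 : ℝ × ℝ → ℝ) : Fin 2 → Fin 2 → ℝ × ℝ → ℝ :=
  fun i j y => ![m1, m2] i y * ![m1, m2] j y / h y

theorem differentiableAt_momentumFlux {h m1 m2 : ℝ × ℝ → ℝ} {x : ℝ × ℝ}
    (hh : DifferentiableAt ℝ h x) (hm1 : DifferentiableAt ℝ m1 x)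
    (hm2 : DifferentiableAt ℝ m2 x) (h0 : h x ≠ 0) (i j : Fin 2) :
    DifferentiableAt ℝ (momentumFlux h m1 m2 i j) x := by
  unfold momentumFlux
  fin_cases i <;> fin_cases j <;>
  simp only [Fin.zero_eta, Fin.mk_one, Fin.isValue, Matrix.cons_val', Matrix.cons_val_zero,
    Matrix.cons_val_one, Matrix.cons_val_fin_one] <;>
  fun_prop (disch := exact h0)

theorem stress_eq_momentumFlux_add (g11 g12 g22 h m1 m2 : ℝ × ℝ → ℝ) (g : ℝ) :
    stress g11 g12 g22 h m1 m2 g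
      = fun k l y =>
          momentumFlux h m1 m2 k l y + (1 / 2 * g * h y ^ 2) * gcon g11 g12 g22 k l y :=
  rfl

theorem covDiv_momentumFlux_one (g11 g12 g22 h m1 m2 : ℝ × ℝ → ℝ) (x : ℝ × ℝ) :
    covDiv g11 g12 g22 1 (momentumFlux h m1 m2) x
      = pd 0 (fun y => m1 y * m2 y / h y) x + pd 1 (fun y => m2 y ^ 2 / h y) x
        + (1 / gdet g11 g12 g22 x) *
            ((m1 x / (2 * h x)) * (m2 x * g22 x - m1 x * g12 x) * pd 0 g11 x
              + (m1 x / h x) * (m1 x * g11 x - m2 x * g12 x) * pd 0 g12 x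
              + (m2 x / (2 * h x)) * (3 * m1 x * g11 x + m2 x * g12 x) * pd 0 g22 x)
        + (1 / gdet g11 g12 g22 x) *
            (-(1 / (2 * h x)) *
                  (2 * m1 x * m2 x * g12 x + m1 x ^ 2 * g11 x - m2 x ^ 2 * g22 x)
                  * pd 1 g11 x
              - (2 * m2 x ^ 2 * g12 x / h x) * pd 1 g12 x
              + (m2 x ^ 2 * g11 x / h x) * pd 1 g22 x) := by
  have hflux10 : momentumFlux h m1 m2 1 0 = fun y => m1 y * m2 y / h y := by
    funext y
    simp [momentumFlux, mul_comm]
  have hflux11 : momentumFlux h m1 m2 1 1 = fun y => m2 y ^ 2 / h y := by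
    funext y
    simp [momentumFlux, sq]
  simp only [covDiv, Fin.sum_univ_two, hflux10, hflux11]
  simp only [momentumFlux, _root_.Gamma, gcon, gcov, Fin.sum_univ_two, Fin.isValue,
    Matrix.of_apply, Matrix.cons_val', Matrix.cons_val_zero, Matrix.cons_val_one,
    Matrix.cons_val_fin_one]
  ring

theorem second_momentum_balance_splitting_general
    (g11 g12 g22 h m1 m2 b : ℝ × ℝ → ℝ) (g : ℝ)
    (h11 : Differentiable ℝ g11) (h12 : Differentiable ℝ g12)
    (h22 : Differentiable ℝ g22) (hh : Differentiable ℝ h)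
    (hm1 : Differentiable ℝ m1) (hm2 : Differentiable ℝ m2)
    (hγ : ∀ x, gdet g11 g12 g22 x ≠ 0) (hhne : ∀ x, h x ≠ 0) :
    ∀ x : ℝ × ℝ,
      (∑ j : Fin 2, pd j (fun y => stress g11 g12 g22 h m1 m2 g 1 j y) x)
        + (∑ j : Fin 2, ∑ k : Fin 2, Gamma g11 g12 g22 1 j k x *
            stress g11 g12 g22 h m1 m2 g k j x)
        + (∑ j : Fin 2, ∑ k : Fin 2, Gamma g11 g12 g22 j j k x *
            stress g11 g12 g22 h m1 m2 g 1 k x)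
        - source g11 g12 g22 h b g 1 x
      = pd 0 (fun y => m1 y * m2 y / h y) x + pd 1 (fun y => m2 y ^ 2 / h y) x
        + (1 / gdet g11 g12 g22 x) *
            (-(g * h x * g12 x) * (pd 0 h x + pd 0 b x)
              + (m1 x / (2 * h x)) * (m2 x * g22 x - m1 x * g12 x) * pd 0 g11 x
              + (m1 x / h x) * (m1 x * g11 x - m2 x * g12 x) * pd 0 g12 x
              + (m2 x / (2 * h x)) * (3 * m1 x * g11 x + m2 x * g12 x) * pd 0 g22 x)
        + (1 / gdet g11 g12 g22 x) *
            (g * h x * g11 x * (pd 1 h x + pd 1 b x)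
              - (1 / (2 * h x)) *
                  (2 * m1 x * m2 x * g12 x + m1 x ^ 2 * g11 x - m2 x ^ 2 * g22 x)
                  * pd 1 g11 x
              - (2 * m2 x ^ 2 * g12 x / h x) * pd 1 g12 x
              + (m2 x ^ 2 * g11 x / h x) * pd 1 g22 x) := by
  intro x
  have hflux := differentiableAt_momentumFlux (hh x) (hm1 x) (hm2 x) (hhne x) 1
  have hpressure : ∀ j, DifferentiableAt ℝ
      (fun y => (1 / 2 * g * h y ^ 2) * gcon g11 g12 g22 1 j y) x := fun j =>
    ((hh x).fun_pow 2).const_mul _ |>.mul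
      (differentiableAt_gcon (h11 x) (h12 x) (h22 x) (hγ x) 1 j)
  change covDiv g11 g12 g22 1 (stress g11 g12 g22 h m1 m2 g) x
    - source g11 g12 g22 h b g 1 x = _
  rw [stress_eq_momentumFlux_add, covDiv_add hflux hpressure, covDiv_momentumFlux_one,
    covDiv_pressure g 1 (h11 x) (h12 x) (h22 x) (hh x) (hγ x)]
  simp only [source, gcon, Fin.sum_univ_two, Fin.isValue, Matrix.of_apply, Matrix.cons_val',
    Matrix.cons_val_zero, Matrix.cons_val_one, Matrix.cons_val_fin_one]
  ring

/-- flux/nonconservative splitting of the second momentum balance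
operator of the shallow water system on a manifold. -/
theorem second_momentum_balance_splitting
    (g11 g12 g22 h m1 m2 b : ℝ × ℝ → ℝ) (g : ℝ)
    (h11 : Differentiable ℝ g11) (h12 : Differentiable ℝ g12)
    (h22 : Differentiable ℝ g22) (hh : Differentiable ℝ h)
    (hm1 : Differentiable ℝ m1) (hm2 : Differentiable ℝ m2)
    (hb : Differentiable ℝ b)
    (hγ : ∀ x, gdet g11 g12 g22 x ≠ 0) (hhne : ∀ x, h x ≠ 0) :
    ∀ x : ℝ × ℝ,
      (∑ j : Fin 2, pd j (fun y => stress g11 g12 g22 h m1 m2 g 1 j y) x)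
        + (∑ j : Fin 2, ∑ k : Fin 2, Gamma g11 g12 g22 1 j k x *
            stress g11 g12 g22 h m1 m2 g k j x)
        + (∑ j : Fin 2, ∑ k : Fin 2, Gamma g11 g12 g22 j j k x *
            stress g11 g12 g22 h m1 m2 g 1 k x)
        - source g11 g12 g22 h b g 1 x
      = pd 0 (fun y => m1 y * m2 y / h y) x + pd 1 (fun y => m2 y ^ 2 / h y) x
        + (1 / gdet g11 g12 g22 x) *
            (-(g * h x * g12 x) * (pd 0 h x + pd 0 b x)
              + (m1 x / (2 * h x)) * (m2 x * g22 x - m1 x * g12 x) * pd 0 g11 x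
              + (m1 x / h x) * (m1 x * g11 x - m2 x * g12 x) * pd 0 g12 x
              + (m2 x / (2 * h x)) * (3 * m1 x * g11 x + m2 x * g12 x) * pd 0 g22 x)
        + (1 / gdet g11 g12 g22 x) *
            (g * h x * g11 x * (pd 1 h x + pd 1 b x)
              - (1 / (2 * h x)) *
                  (2 * m1 x * m2 x * g12 x + m1 x ^ 2 * g11 x - m2 x ^ 2 * g22 x)
                  * pd 1 g11 x
              - (2 * m2 x ^ 2 * g12 x / h x) * pd 1 g12 x
              + (m2 x ^ 2 * g11 x / h x) * pd 1 g22 x) :=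
  second_momentum_balance_splitting_general g11 g12 g22 h m1 m2 b g h11 h12 h22 hh hm1 hm2 hγ hhne
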